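/- Let a,b,c ∈ ℍ be non-collinear, let u := a ⋉ b + b ⋉ c + c ⋉ a (the pseudo-Euclidean normal of the circum-plane of a,b,c), and set Δ := (S_ab+S_bc−S_ca)(S_bc+S_ca−S_ab)(S_ca+S_ab−S_bc). Then ⟨u,u⟩ > 0 ⟺ Δ > 0, ⟨u,u⟩ < 0 ⟺ Δ < 0, and ⟨u,u⟩ = 0 ⟺ Δ = 0. (By the classification of cycles in the hyperbolic plane, the circum-circle of the three points is a distance circle, a distance line, or a horocycle according as ⟨u,u⟩ is positive, negative, or zero; so the invariant Δ, which depends only on the pairwise distances, determines the type of the circum-circle.) -/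
import Mathlib

open Real Finset

noncomputable section

/-- Points of `ℝ³`. -/
abbrev V3 : Type := Fin 3 → ℝ

/-- The pseudo-Euclidean scalar product `⟨x,y⟩ = x₀y₀ − x₁y₁ − x₂y₂`. -/
def pscal (x y : V3) : ℝ := x 0 * y 0 - x 1 * y 1 - x 2 * y 2

/-- The hyperboloid model `ℍ` of the hyperbolic plane. -/
def Hyp : Set V3 := {x | pscal x x = 1 ∧ 0 < x 0}

/-- Inverse hyperbolic cosine. -/
def arcoshR (x : ℝ) : ℝ := Real.log (x + Real.sqrt (x ^ 2 - 1))

/-- Hyperbolic distance `d(a,b) = arcosh ⟨a,b⟩`. -/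
def dH (a b : V3) : ℝ := arcoshR (pscal a b)

/-- Determinant of the 3×3 matrix with columns `a`, `b`, `c`. -/
def det3 (a b c : V3) : ℝ :=
  a 0 * (b 1 * c 2 - b 2 * c 1) - b 0 * (a 1 * c 2 - a 2 * c 1) + c 0 * (a 1 * b 2 - a 2 * b 1)

/-- `S_ab = sinh(d(a,b)/2)`. -/
def SS (a b : V3) : ℝ := Real.sinh (dH a b / 2)

/-- Signed area of the triangle `a b c`. -/
def triArea (a b c : V3) : ℝ :=
  2 * Real.arctan (det3 a b c / (pscal a b + pscal b c + pscal c a + 1))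

/-- Signed area of the `n`-gon with vertices `z 1, …, z n`. -/
def polyArea (n : ℕ) (z : ℕ → V3) : ℝ :=
  ∑ k ∈ Finset.Ico 2 n, triArea (z 1) (z k) (z (k + 1))

/-- Cyclic successor on `{1, …, n}`. -/
def nxt (n k : ℕ) : ℕ := k % n + 1

/-- Oriented convexity of the `n`-gon `z 1, …, z n`. -/
def OrientedConvex (n : ℕ) (z : ℕ → V3) : Prop :=
  ∀ k ∈ Finset.Icc 1 n, ∀ j ∈ Finset.Icc 1 n,
    j ≠ k → j ≠ nxt n k → 0 < det3 (z k) (z (nxt n k)) (z j)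

/-- A set of points lies in a common 2-dimensional linear subspace of `ℝ³`. -/
def Collin (s : Set V3) : Prop :=
  ∃ W : Submodule ℝ V3, Module.finrank ℝ W = 2 ∧ ∀ x ∈ s, x ∈ W

/-- A set of points lies in a common affine plane of `ℝ³` not containing the origin. -/
def Cocyc (s : Set V3) : Prop :=
  ∃ u : V3, ∃ p : ℝ, u ≠ 0 ∧ p ≠ 0 ∧ ∀ x ∈ s, pscal u x = p

/-- `a ⋉ b`: the unique vector of `ℝ³` with `⟨a ⋉ b, x⟩ = [a,b,x]` for all `x ∈ ℝ³`. -/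
def pcross (a b : V3) : V3 :=
  ![a 1 * b 2 - a 2 * b 1, a 0 * b 2 - a 2 * b 0, a 1 * b 0 - a 0 * b 1]

/-- ⟨a,b⟩ ≥ 1 for points on the hyperboloid. -/
lemma one_le_pscal {a b : V3} (ha : a ∈ Hyp) (hb : b ∈ Hyp) : 1 ≤ pscal a b := by
  obtain ⟨ha1, ha2⟩ := ha
  obtain ⟨hb1, hb2⟩ := hb
  simp only [pscal] at ha1 hb1 ⊢
  nlinarith [sq_nonneg (a 1 - b 1), sq_nonneg (a 2 - b 2),
    sq_nonneg (a 1 * b 2 - a 2 * b 1), mul_pos ha2 hb2,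
    sq_nonneg (a 0 * b 0 - 1 - a 1 * b 1 - a 2 * b 2),
    sq_nonneg (a 0 - b 0), sq_nonneg (a 0 + b 0)]

lemma cosh_arcoshR {x : ℝ} (hx : 1 ≤ x) : Real.cosh (arcoshR x) = x := by
  have h1 : (0:ℝ) ≤ x ^ 2 - 1 := by nlinarith
  have hs : Real.sqrt (x ^ 2 - 1) ^ 2 = x ^ 2 - 1 := Real.sq_sqrt h1
  have hsn : 0 ≤ Real.sqrt (x ^ 2 - 1) := Real.sqrt_nonneg _
  have ht : 0 < x + Real.sqrt (x ^ 2 - 1) := by nlinarith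
  rw [arcoshR, Real.cosh_eq, Real.exp_log ht, ← Real.log_inv, Real.exp_log (by positivity)]
  have hinv : (x + Real.sqrt (x ^ 2 - 1))⁻¹ = x - Real.sqrt (x ^ 2 - 1) := by
    rw [inv_eq_iff_eq_inv, eq_comm, inv_eq_iff_eq_inv, eq_comm]
    · field_simp
      nlinarith
  rw [hinv]; ring

lemma arcoshR_nonneg {x : ℝ} (hx : 1 ≤ x) : 0 ≤ arcoshR x := by
  have h1 : (0:ℝ) ≤ x ^ 2 - 1 := by nlinarith
  apply Real.log_nonneg
  nlinarith [Real.sqrt_nonneg (x ^ 2 - 1)]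

/-- key: ⟨a,b⟩ = 1 + 2 S_ab². -/
lemma pscal_eq_SS {a b : V3} (ha : a ∈ Hyp) (hb : b ∈ Hyp) :
    pscal a b = 1 + 2 * SS a b ^ 2 := by
  have h1 := one_le_pscal ha hb
  have h2 : Real.cosh (dH a b) = pscal a b := cosh_arcoshR h1
  have : Real.cosh (dH a b) = 2 * Real.sinh (dH a b / 2) ^ 2 + 1 := by
    have := Real.cosh_two_mul (dH a b / 2)
    have h3 := Real.cosh_sq (dH a b / 2)
    rw [show 2 * (dH a b / 2) = dH a b by ring] at this
    linarith
  rw [SS, ← h2, this]; ring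

lemma SS_nonneg {a b : V3} (ha : a ∈ Hyp) (hb : b ∈ Hyp) : 0 ≤ SS a b := by
  rw [SS]
  rw [Real.sinh_nonneg_iff]
  have := arcoshR_nonneg (one_le_pscal ha hb)
  rw [dH]; linarith

/-- Corollary 3.2: the invariant `Δ` determines the sign of `⟨u,u⟩`, hence the type of
the circum-circle of three non-collinear points. -/
theorem circumcircle_type (a b c : V3) (ha : a ∈ Hyp) (hb : b ∈ Hyp) (hc : c ∈ Hyp)
    (hnc : ¬ Collin {a, b, c})
    (u : V3) (hu : u = pcross a b + pcross b c + pcross c a)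
    (Δ : ℝ)
    (hΔ : Δ = (SS a b + SS b c - SS c a) * (SS b c + SS c a - SS a b) *
      (SS c a + SS a b - SS b c)) :
    (0 < pscal u u ↔ 0 < Δ) ∧ (pscal u u < 0 ↔ Δ < 0) ∧ (pscal u u = 0 ↔ Δ = 0) := by
  have hA : a 0 * a 0 - a 1 * a 1 - a 2 * a 2 = 1 := ha.1
  have hB : b 0 * b 0 - b 1 * b 1 - b 2 * b 2 = 1 := hb.1
  have hC : c 0 * c 0 - c 1 * c 1 - c 2 * c 2 = 1 := hc.1
  have key : pscal u u = 3 - 2 * (pscal a b + pscal b c + pscal c a)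
      - (pscal a b ^ 2 + pscal b c ^ 2 + pscal c a ^ 2)
      + 2 * (pscal a b * pscal b c + pscal b c * pscal c a + pscal c a * pscal a b) := by
    subst hu
    simp only [pscal, pcross, Pi.add_apply, Matrix.cons_val_zero, Matrix.cons_val_one,
      Matrix.head_cons, Matrix.cons_val_two, Matrix.tail_cons]
    linear_combination
      (1 + 2 * b 2 * c 2 - b 2 ^ 2 + 2 * b 1 * c 1 - b 1 ^ 2 - 2 * b 0 * c 0 + b 0 ^ 2) * hA +
      (1 - c 2 ^ 2 - c 1 ^ 2 + c 0 ^ 2 + 2 * a 2 * c 2 + 2 * a 1 * c 1 - 2 * a 0 * c 0) * hB +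
      (1 + 2 * a 2 * b 2 - a 2 ^ 2 + 2 * a 1 * b 1 - a 1 ^ 2 - 2 * a 0 * b 0 + a 0 ^ 2) * hC
  have e1 := pscal_eq_SS ha hb
  have e2 := pscal_eq_SS hb hc
  have e3 := pscal_eq_SS hc ha
  set s1 := SS a b with hs1
  set s2 := SS b c with hs2
  set s3 := SS c a with hs3
  have key2 : pscal u u = 4 * (s1 + s2 + s3) * Δ := by
    rw [hΔ, key, e1, e2, e3]; ring
  have n1 : 0 ≤ s1 := SS_nonneg ha hb
  have n2 : 0 ≤ s2 := SS_nonneg hb hc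
  have n3 : 0 ≤ s3 := SS_nonneg hc ha
  rcases eq_or_lt_of_le (by linarith : (0:ℝ) ≤ s1 + s2 + s3) with h | h
  · have h1 : s1 = 0 := by linarith
    have h2 : s2 = 0 := by linarith
    have h3 : s3 = 0 := by linarith
    have hd : Δ = 0 := by rw [hΔ, h1, h2, h3]; ring
    have huu : pscal u u = 0 := by rw [key2, hd]; ring
    simp [hd, huu]
  · rw [key2]
    have h4 : (0:ℝ) < 4 * (s1 + s2 + s3) := by linarith
    refine ⟨mul_pos_iff_of_pos_left h4, ?_, ?_⟩
    · constructor
      · intro hp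
        by_contra hcon
        push_neg at hcon
        exact absurd (mul_nonneg h4.le hcon) (not_le.mpr hp)
      · intro hp
        exact mul_neg_of_pos_of_neg h4 hp
    · rw [mul_eq_zero]
      simp [ne_of_gt h4]

end
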